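/- The first-integral identity ρ'(y)² = ρ(y)² − (2/3) ρ(y)³ holds for all y ∈ ℝ. -/

import Mathlib

open Real

/-- The spike profile `ρ(y) = (3/2) sech²(y/2)`. -/
noncomputable def rho (y : ℝ) : ℝ := (3/2) * (1 / Real.cosh (y/2))^2

/-! With `f = a sech²(b y)` one has `f' = -2 b f tanh(b y)` and `tanh² = 1 - sech² = 1 - f / a`,
so `a f'² = 4 b² (a f² - f³)`; for `a = 3/2`, `b = 1/2` this is the first integral of `ρ`. -/

lemma hasDerivAt_sech_sq (b y : ℝ) :
    HasDerivAt (fun y => (1 / cosh (b * y)) ^ 2) (-2 * b * sinh (b * y) / cosh (b * y) ^ 3) y := by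
  have hcosh : HasDerivAt (fun y => cosh (b * y)) (sinh (b * y) * b) y := by
    simpa using ((hasDerivAt_id y).const_mul b).cosh
  have hc : cosh (b * y) ≠ 0 := (cosh_pos _).ne'
  refine (((hasDerivAt_const y (1 : ℝ)).fun_div hcosh hc).fun_pow 2).congr_deriv ?_
  simp only [Nat.cast_ofNat, Nat.reduceSub, pow_one]
  field_simp
  ring

lemma mul_deriv_sq_const_mul_sech_sq (a b y : ℝ) :
    a * (deriv (fun y => a * (1 / cosh (b * y)) ^ 2) y) ^ 2 =
      4 * b ^ 2 * (a * (a * (1 / cosh (b * y)) ^ 2) ^ 2 - (a * (1 / cosh (b * y)) ^ 2) ^ 3) := by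
  rw [((hasDerivAt_sech_sq b y).const_mul a).deriv]
  have hc : cosh (b * y) ≠ 0 := (cosh_pos _).ne'
  field_simp
  linear_combination 4 * a ^ 3 * b ^ 2 * sinh_sq (b * y)

theorem stmt_4 : ∀ y : ℝ, (deriv rho y)^2 = (rho y)^2 - (2/3) * (rho y)^3 := by
  intro y
  have hrho : rho = fun y => 3 / 2 * (1 / cosh (2⁻¹ * y)) ^ 2 := by
    funext y
    rw [rho, div_eq_inv_mul y]
  rw [hrho]
  beta_reduce
  linear_combination (2 / 3) * mul_deriv_sq_const_mul_sech_sq (3 / 2) 2⁻¹ y
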